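/- Let the activation be h-smoothly approximately ReLU (for some h > 0). Let V = (V_1,…,V_{L+1}) and W = (W_1,…,W_{L+1}) be weight tuples and ℓ ∈ {1,…,L+1} such that V_j = W_j for all j ≠ ℓ, and suppose ‖V‖, ‖W‖ > √(L + 1/2). Then for every example s (with ‖x_s‖ = 1): (1) ‖u_{j,s}^V‖ ≤ ‖V‖^{L+1} for all j ∈ {1,…,L+1}; (2) ‖x_{j,s}^V‖ ≤ ‖V‖^{L+1} for all j ∈ {0,…,L}; (3) ‖u_{j,s}^V − u_{j,s}^W‖ ≤ ‖V_ℓ − W_ℓ‖_op·‖V‖^{L+1} for all j ∈ {1,…,L+1}; and (4) ‖x_{j,s}^V − x_{j,s}^W‖ ≤ ‖V_ℓ − W_ℓ‖_op·‖V‖^{L+1} for all j ∈ {0,…,L}. -/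

import Mathlib

open scoped BigOperators
noncomputable section

abbrev Params (L p : ℕ) := EuclideanSpace ℝ ((Fin L × Fin p × Fin p) ⊕ Fin p)

def layerMat {L p : ℕ} (w : Params L p) (ℓ : Fin L) : Matrix (Fin p) (Fin p) ℝ :=
  Matrix.of fun i j => w (Sum.inl (ℓ, i, j))

def outVec {L p : ℕ} (w : Params L p) : Fin p → ℝ := fun j => w (Sum.inr j)

def SmoothApproxReLU (φ : ℝ → ℝ) (h : ℝ) : Prop :=
  Differentiable ℝ φ ∧ φ 0 = 0 ∧
    (∀ z₁ z₂ : ℝ, |deriv φ z₁ - deriv φ z₂| ≤ (1 / h) * |z₁ - z₂|) ∧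
    (∀ z : ℝ, |deriv φ z| ≤ 1) ∧ (∀ z : ℝ, |deriv φ z * z - φ z| ≤ h / 2)

def feat {L p : ℕ} (φ : ℝ → ℝ) (w : Params L p) (x : Fin p → ℝ) : ℕ → Fin p → ℝ
  | 0 => x
  | ℓ + 1 =>
    if hl : ℓ < L then fun i => φ ((layerMat w ⟨ℓ, hl⟩).mulVec (feat φ w x ℓ) i)
    else feat φ w x ℓ

def netOut {L p : ℕ} (φ : ℝ → ℝ) (w : Params L p) (x : Fin p → ℝ) : ℝ :=
  ∑ j, outVec w j * feat φ w x L j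

def lossS {L p : ℕ} (φ : ℝ → ℝ) (x : Fin p → ℝ) (y : ℝ) (w : Params L p) : ℝ :=
  Real.log (1 + Real.exp (-(y * netOut φ w x)))

def loss {L p n : ℕ} (φ : ℝ → ℝ) (x : Fin n → Fin p → ℝ) (y : Fin n → ℝ) (w : Params L p) : ℝ :=
  (1 / (n : ℝ)) * ∑ s, lossS φ (x s) (y s) w

def enorm' {p : ℕ} (v : Fin p → ℝ) : ℝ := Real.sqrt (∑ i, v i ^ 2)

def hmax (L p : ℕ) (J1 nV1 : ℝ) : ℝ :=
  min ((L : ℝ) ^ ((L : ℝ) / 2 - 3) * Real.log (1 / J1) / (24 * Real.sqrt p * nV1 ^ L)) 1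

def alphaMax (L p : ℕ) (J1 nV1 h : ℝ) : ℝ :=
  min (h / (1024 * ((L : ℝ) + 1) ^ 2 * p * J1 * nV1 ^ (3 * L + 5)))
    (((L : ℝ) + 1 / 2) * nV1 ^ 2 /
      (2 * L * ((L : ℝ) + 3 / 4) ^ 2 * J1 * Real.log (1 / J1) ^ ((2 : ℝ) / L)))

def Qtilde (L : ℕ) (J1 nV1 α : ℝ) : ℝ :=
  (L : ℝ) * ((L : ℝ) + 3 / 4) ^ 2 * α * J1 * Real.log (1 / J1) ^ ((2 : ℝ) / L) /
    (((L : ℝ) + 1 / 2) * nV1 ^ 2)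

def lipGrad {L p : ℕ} (J : Params L p → ℝ) (v : Params L p) : ℝ :=
  Filter.limsup (fun w : Params L p => ‖gradient J v - gradient J w‖ / ‖v - w‖)
    (nhdsWithin v {v}ᶜ)

/-- Operator (ℓ²→ℓ²) norm of a real matrix. -/
def opNorm {m k : ℕ} (A : Matrix (Fin m) (Fin k) ℝ) : ℝ :=
  ‖LinearMap.toContinuousLinearMap (Matrix.toEuclideanLin A)‖

/-- Outer-layer weights viewed as a `1 × p` matrix. -/
def outMat {L p : ℕ} (w : Params L p) : Matrix (Fin 1) (Fin p) ℝ :=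
  Matrix.of fun _ j => w (Sum.inr j)

/-- Pre-activation features `u_{ℓ+1,s}^V` of the hidden layer with 0-based index `ℓ`. -/
def uFeat {L p : ℕ} (φ : ℝ → ℝ) (w : Params L p) (x : Fin p → ℝ) (ℓ : Fin L) : Fin p → ℝ :=
  (layerMat w ℓ).mulVec (feat φ w x ℓ)

/-- The diagonal matrix `Σ_{ℓ+1,s}^V = diag(φ'(u_{ℓ+1,s}^V))`. -/
def sigmaMat {L p : ℕ} (φ : ℝ → ℝ) (w : Params L p) (x : Fin p → ℝ) (ℓ : Fin L) :
    Matrix (Fin p) (Fin p) ℝ :=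
  Matrix.diagonal fun i => deriv φ (uFeat φ w x ℓ i)

/-- `g_s(V) = 1 / (1 + exp(y_s f_V(x_s)))`. -/
def gS {L p : ℕ} (φ : ℝ → ℝ) (x : Fin p → ℝ) (y : ℝ) (w : Params L p) : ℝ :=
  1 / (1 + Real.exp (y * netOut φ w x))

/-- `V` and `W` agree on every layer except possibly the one with paper index `ℓ + 1`
(`ℓ : Fin (L+1)`; the value `ℓ = L` designates the outer layer `V_{L+1}`). -/
def eqExcept {L p : ℕ} (V W : Params L p) (ℓ : Fin (L + 1)) : Prop :=
  (∀ j : Fin L, (j : ℕ) ≠ (ℓ : ℕ) → layerMat V j = layerMat W j) ∧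
    ((ℓ : ℕ) < L → outMat V = outMat W)

/-- Operator norm `‖V_ℓ - W_ℓ‖_op` of the difference at the (single) layer with paper
index `ℓ + 1`. -/
def layerOpDiff {L p : ℕ} (V W : Params L p) (ℓ : Fin (L + 1)) : ℝ :=
  if h : (ℓ : ℕ) < L then opNorm (layerMat V ⟨ℓ, h⟩ - layerMat W ⟨ℓ, h⟩)
  else opNorm (outMat V - outMat W)


/-!
Each hidden layer is a matrix of Frobenius norm at most `‖V‖` followed by a 1-Lipschitz
activation vanishing at `0`, so it stretches norms (and differences) by at most `‖V‖`;
since `‖V‖ > √(L + 1/2) ≥ 1`, every feature is bounded by `‖V‖ ^ (L + 1)`. For the difference,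
`V` and `W` compute the same features up to the layer `ℓ` where they disagree; there the difference
is `V_ℓ - W_ℓ` applied to a common input, of norm at most `‖V_ℓ - W_ℓ‖_op · ‖V‖ ^ (ℓ - 1)`,
and each later, shared, layer stretches it by at most `‖V‖`.
-/

open Matrix

section EuclideanNorm

variable {m p : ℕ}

lemma enorm'_nonneg (v : Fin p → ℝ) : 0 ≤ enorm' v := Real.sqrt_nonneg _

lemma enorm'_eq_norm_toLp (v : Fin p → ℝ) : enorm' v = ‖WithLp.toLp 2 v‖ := by
  simp [enorm', EuclideanSpace.norm_eq, sq_abs]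

lemma enorm'_le_of_abs_le {u v : Fin p → ℝ} (h : ∀ i, |u i| ≤ |v i|) : enorm' u ≤ enorm' v :=
  Real.sqrt_le_sqrt <| Finset.sum_le_sum fun i _ => sq_le_sq.mpr (h i)

lemma enorm'_const_fin_one (c : ℝ) : enorm' (fun _ : Fin 1 => c) = |c| := by
  simp [enorm', Real.sqrt_sq_eq_abs]

lemma abs_sum_mul_le_enorm' (a b : Fin p → ℝ) : |∑ i, a i * b i| ≤ enorm' a * enorm' b := by
  rw [← Real.sqrt_sq_eq_abs, enorm', enorm', ← Real.sqrt_mul (by positivity)]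
  exact Real.sqrt_le_sqrt (Finset.sum_mul_sq_le_sq_mul_sq _ _ _)

lemma enorm'_mulVec_le_frobenius (A : Matrix (Fin m) (Fin p) ℝ) (v : Fin p → ℝ) :
    enorm' (A *ᵥ v) ≤ √(∑ i, ∑ j, A i j ^ 2) * enorm' v := by
  rw [enorm', enorm', ← Real.sqrt_mul (by positivity), Finset.sum_mul]
  exact Real.sqrt_le_sqrt <| Finset.sum_le_sum fun i _ =>
    Finset.sum_mul_sq_le_sq_mul_sq Finset.univ (A i) v

lemma opNorm_nonneg (A : Matrix (Fin m) (Fin p) ℝ) : 0 ≤ opNorm A := norm_nonneg _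

lemma enorm'_mulVec_le_opNorm (A : Matrix (Fin m) (Fin p) ℝ) (v : Fin p → ℝ) :
    enorm' (A *ᵥ v) ≤ opNorm A * enorm' v := by
  simpa [enorm'_eq_norm_toLp, opNorm] using
    (LinearMap.toContinuousLinearMap (toEuclideanLin A)).le_opNorm (WithLp.toLp 2 v)

end EuclideanNorm

section ParamsNorm

variable {L p : ℕ}

lemma norm_params_sq (V : Params L p) :
    ‖V‖ ^ 2 = (∑ l : Fin L, ∑ i, ∑ j, layerMat V l i j ^ 2) + ∑ j, outVec V j ^ 2 := by
  rw [EuclideanSpace.norm_eq, Real.sq_sqrt (by positivity), Fintype.sum_sum_type]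
  simp [layerMat, outVec, sq_abs, Fintype.sum_prod_type]

lemma frobenius_layerMat_le_norm (V : Params L p) (l : Fin L) :
    √(∑ i, ∑ j, layerMat V l i j ^ 2) ≤ ‖V‖ := by
  rw [← Real.sqrt_sq (norm_nonneg V), norm_params_sq]
  refine Real.sqrt_le_sqrt ?_
  have hl := Finset.single_le_sum (f := fun l' : Fin L => ∑ i, ∑ j, layerMat V l' i j ^ 2)
    (fun _ _ => by positivity) (Finset.mem_univ l)
  have hout : 0 ≤ ∑ j, outVec V j ^ 2 := by positivity
  linarith

lemma enorm'_layerMat_mulVec_le (w : Params L p) (j : Fin L) (v : Fin p → ℝ) :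
    enorm' (layerMat w j *ᵥ v) ≤ ‖w‖ * enorm' v :=
  (enorm'_mulVec_le_frobenius _ _).trans <|
    mul_le_mul_of_nonneg_right (frobenius_layerMat_le_norm w j) (enorm'_nonneg _)

lemma enorm'_outVec_le_norm (V : Params L p) : enorm' (outVec V) ≤ ‖V‖ := by
  rw [← Real.sqrt_sq (norm_nonneg V), norm_params_sq]
  refine Real.sqrt_le_sqrt ?_
  have hlayers : 0 ≤ ∑ l : Fin L, ∑ i, ∑ j, layerMat V l i j ^ 2 := by positivity
  simpa [enorm'] using hlayers

lemma one_le_norm_of_sqrt_lt (hL : 1 ≤ L) {V : Params L p} (hV : √((L : ℝ) + 1 / 2) < ‖V‖) :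
    1 ≤ ‖V‖ := by
  have hL' : (1 : ℝ) ≤ L := by exact_mod_cast hL
  exact (Real.one_le_sqrt.mpr (by linarith)).trans hV.le

end ParamsNorm

lemma SmoothApproxReLU.lipschitzWith_one {φ : ℝ → ℝ} {h : ℝ} (hφ : SmoothApproxReLU φ h) :
    LipschitzWith 1 φ :=
  lipschitzWith_of_nnnorm_deriv_le hφ.1 fun z => by
    rw [← NNReal.coe_le_coe, coe_nnnorm, Real.norm_eq_abs]
    exact hφ.2.2.2.1 z

section Network

variable {L p : ℕ} {φ : ℝ → ℝ} (x : Fin p → ℝ)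

lemma feat_succ (w : Params L p) {k : ℕ} (hk : k < L) :
    feat φ w x (k + 1) = fun i => φ (uFeat φ w x ⟨k, hk⟩ i) := by
  simp [feat, hk, uFeat]

lemma netOut_eq_outMat_mulVec (w : Params L p) :
    (fun _ : Fin 1 => netOut φ w x) = outMat w *ᵥ feat φ w x L := by
  funext
  simp [netOut, outMat, outVec, mulVec, dotProduct]

lemma enorm'_uFeat_le (w : Params L p) (j : Fin L) :
    enorm' (uFeat φ w x j) ≤ ‖w‖ * enorm' (feat φ w x j) :=
  enorm'_layerMat_mulVec_le w j _

lemma abs_netOut_le (w : Params L p) : |netOut φ w x| ≤ ‖w‖ * enorm' (feat φ w x L) :=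
  (abs_sum_mul_le_enorm' _ _).trans <|
    mul_le_mul_of_nonneg_right (enorm'_outVec_le_norm w) (enorm'_nonneg _)

lemma enorm'_feat_succ_le (hφ : LipschitzWith 1 φ) (hφ0 : φ 0 = 0) (w : Params L p) {k : ℕ}
    (hk : k < L) : enorm' (feat φ w x (k + 1)) ≤ enorm' (uFeat φ w x ⟨k, hk⟩) := by
  rw [feat_succ x w hk]
  refine enorm'_le_of_abs_le fun i => ?_
  simpa [Real.dist_eq, hφ0] using hφ.dist_le_mul (uFeat φ w x ⟨k, hk⟩ i) 0

lemma enorm'_feat_succ_sub_le (hφ : LipschitzWith 1 φ) (V W : Params L p) {k : ℕ} (hk : k < L) :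
    enorm' (feat φ V x (k + 1) - feat φ W x (k + 1)) ≤
      enorm' (uFeat φ V x ⟨k, hk⟩ - uFeat φ W x ⟨k, hk⟩) := by
  rw [feat_succ x V hk, feat_succ x W hk]
  refine enorm'_le_of_abs_le fun i => ?_
  simpa [Real.dist_eq] using hφ.dist_le_mul (uFeat φ V x ⟨k, hk⟩ i) (uFeat φ W x ⟨k, hk⟩ i)

lemma enorm'_feat_le (hφ : LipschitzWith 1 φ) (hφ0 : φ 0 = 0) (w : Params L p) :
    ∀ j ≤ L, enorm' (feat φ w x j) ≤ ‖w‖ ^ j * enorm' x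
  | 0, _ => by simp [feat]
  | k + 1, hk => calc
      enorm' (feat φ w x (k + 1)) ≤ ‖w‖ * enorm' (feat φ w x k) :=
        (enorm'_feat_succ_le x hφ hφ0 w hk).trans (enorm'_uFeat_le x w ⟨k, hk⟩)
      _ ≤ ‖w‖ * (‖w‖ ^ k * enorm' x) :=
        mul_le_mul_of_nonneg_left (enorm'_feat_le hφ hφ0 w k (by omega)) (norm_nonneg w)
      _ = ‖w‖ ^ (k + 1) * enorm' x := by ring

variable {V W : Params L p} {ℓ : Fin (L + 1)}

lemma feat_eq_of_le (hdiff : eqExcept V W ℓ) : ∀ j ≤ (ℓ : ℕ), feat φ V x j = feat φ W x j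
  | 0, _ => rfl
  | k + 1, hk => by
    have hkL : k < L := by omega
    rw [feat_succ x V hkL, feat_succ x W hkL, uFeat, uFeat, hdiff.1 ⟨k, hkL⟩ (by simp; omega),
      feat_eq_of_le hdiff k (by omega)]

lemma layerOpDiff_nonneg : 0 ≤ layerOpDiff V W ℓ := by
  unfold layerOpDiff
  split <;> exact opNorm_nonneg _

lemma layerOpDiff_of_eq {j : Fin L} (hj : (j : ℕ) = ℓ) :
    layerOpDiff V W ℓ = opNorm (layerMat V j - layerMat W j) := by
  have hℓ : (ℓ : ℕ) < L := hj ▸ j.2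
  rw [layerOpDiff, dif_pos hℓ]
  congr 3 <;> exact Fin.ext hj.symm

lemma layerOpDiff_of_eq_last (hℓ : (ℓ : ℕ) = L) :
    layerOpDiff V W ℓ = opNorm (outMat V - outMat W) := by
  rw [layerOpDiff, dif_neg (by omega)]

lemma enorm'_uFeat_sub_le (hdiff : eqExcept V W ℓ) (hV : 1 ≤ ‖V‖) (j : Fin L) {B : ℝ}
    (hB : enorm' (feat φ V x j) ≤ B)
    (hD : enorm' (feat φ V x j - feat φ W x j) ≤ layerOpDiff V W ℓ * B) :
    enorm' (uFeat φ V x j - uFeat φ W x j) ≤ layerOpDiff V W ℓ * (‖V‖ * B) := by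
  have hB0 : 0 ≤ B := (enorm'_nonneg _).trans hB
  by_cases hjℓ : (j : ℕ) = ℓ
  · rw [uFeat, uFeat, ← feat_eq_of_le x hdiff j hjℓ.le, ← sub_mulVec, layerOpDiff_of_eq hjℓ]
    refine (enorm'_mulVec_le_opNorm _ _).trans <| mul_le_mul_of_nonneg_left ?_ (opNorm_nonneg _)
    exact hB.trans (le_mul_of_one_le_left hB0 hV)
  · rw [uFeat, uFeat, ← hdiff.1 j hjℓ, ← mulVec_sub]
    calc enorm' (layerMat V j *ᵥ (feat φ V x j - feat φ W x j))
        ≤ ‖V‖ * (layerOpDiff V W ℓ * B) :=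
          (enorm'_layerMat_mulVec_le V j _).trans (mul_le_mul_of_nonneg_left hD (norm_nonneg V))
      _ = layerOpDiff V W ℓ * (‖V‖ * B) := by ring

lemma abs_netOut_sub_le (hdiff : eqExcept V W ℓ) (hV : 1 ≤ ‖V‖) {B : ℝ}
    (hB : enorm' (feat φ V x L) ≤ B)
    (hD : enorm' (feat φ V x L - feat φ W x L) ≤ layerOpDiff V W ℓ * B) :
    |netOut φ V x - netOut φ W x| ≤ layerOpDiff V W ℓ * (‖V‖ * B) := by
  have hB0 : 0 ≤ B := (enorm'_nonneg _).trans hB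
  by_cases hℓ : (ℓ : ℕ) < L
  · have hout : outVec V = outVec W := funext fun j => congrFun (congrFun (hdiff.2 hℓ) 0) j
    have hsub : netOut φ V x - netOut φ W x =
        ∑ j, outVec V j * (feat φ V x L - feat φ W x L) j := by
      simp only [netOut, hout, Pi.sub_apply, mul_sub, Finset.sum_sub_distrib]
    calc |netOut φ V x - netOut φ W x|
        ≤ ‖V‖ * (layerOpDiff V W ℓ * B) := by
          rw [hsub]
          exact (abs_sum_mul_le_enorm' _ _).trans
            (mul_le_mul (enorm'_outVec_le_norm V) hD (enorm'_nonneg _) (norm_nonneg V))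
      _ = layerOpDiff V W ℓ * (‖V‖ * B) := by ring
  · have hℓL : (ℓ : ℕ) = L := by omega
    have hfeat : feat φ V x L = feat φ W x L := feat_eq_of_le x hdiff L hℓL.ge
    rw [← enorm'_const_fin_one]
    change enorm' ((fun _ : Fin 1 => netOut φ V x) - fun _ => netOut φ W x) ≤ _
    rw [netOut_eq_outMat_mulVec, netOut_eq_outMat_mulVec, ← hfeat, ← sub_mulVec,
      layerOpDiff_of_eq_last hℓL]
    refine (enorm'_mulVec_le_opNorm _ _).trans <| mul_le_mul_of_nonneg_left ?_ (opNorm_nonneg _)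
    exact hB.trans (le_mul_of_one_le_left hB0 hV)

lemma enorm'_feat_sub_le (hφ : LipschitzWith 1 φ) (hφ0 : φ 0 = 0) (hdiff : eqExcept V W ℓ)
    (hV : 1 ≤ ‖V‖) :
    ∀ j ≤ L, enorm' (feat φ V x j - feat φ W x j) ≤ layerOpDiff V W ℓ * (‖V‖ ^ j * enorm' x)
  | 0, _ => by simpa [feat, enorm'] using mul_nonneg layerOpDiff_nonneg (enorm'_nonneg x)
  | k + 1, hk => calc
      enorm' (feat φ V x (k + 1) - feat φ W x (k + 1))
        ≤ layerOpDiff V W ℓ * (‖V‖ * (‖V‖ ^ k * enorm' x)) :=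
          (enorm'_feat_succ_sub_le x hφ V W hk).trans <|
            enorm'_uFeat_sub_le x hdiff hV ⟨k, hk⟩ (enorm'_feat_le x hφ hφ0 V k (by omega))
              (enorm'_feat_sub_le hφ hφ0 hdiff hV k (by omega))
      _ = layerOpDiff V W ℓ * (‖V‖ ^ (k + 1) * enorm' x) := by ring

end Network

theorem statement14_general
    (L p : ℕ) (hL : 1 ≤ L)
    (φ : ℝ → ℝ) (h : ℝ) (hφ : SmoothApproxReLU φ h)
    (x : Fin p → ℝ) (hx : enorm' x = 1)
    (V W : Params L p) (ℓ : Fin (L + 1)) (hdiff : eqExcept V W ℓ)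
    (hV : Real.sqrt ((L : ℝ) + 1 / 2) < ‖V‖) :
    ((∀ j : Fin L, enorm' (uFeat φ V x j) ≤ ‖V‖ ^ (L + 1)) ∧
        |netOut φ V x| ≤ ‖V‖ ^ (L + 1)) ∧
    (∀ j : ℕ, j ≤ L → enorm' (feat φ V x j) ≤ ‖V‖ ^ (L + 1)) ∧
    ((∀ j : Fin L, enorm' (uFeat φ V x j - uFeat φ W x j) ≤
          layerOpDiff V W ℓ * ‖V‖ ^ (L + 1)) ∧
        |netOut φ V x - netOut φ W x| ≤ layerOpDiff V W ℓ * ‖V‖ ^ (L + 1)) ∧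
    (∀ j : ℕ, j ≤ L → enorm' (feat φ V x j - feat φ W x j) ≤
        layerOpDiff V W ℓ * ‖V‖ ^ (L + 1)) := by
  have hlip := hφ.lipschitzWith_one
  have hφ0 : φ 0 = 0 := hφ.2.1
  have hV1 := one_le_norm_of_sqrt_lt hL hV
  have hΔ : 0 ≤ layerOpDiff V W ℓ := layerOpDiff_nonneg
  have hfeat (j : ℕ) (hj : j ≤ L) : enorm' (feat φ V x j) ≤ ‖V‖ ^ j := by
    simpa [hx] using enorm'_feat_le x hlip hφ0 V j hj
  have hD (j : ℕ) (hj : j ≤ L) :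
      enorm' (feat φ V x j - feat φ W x j) ≤ layerOpDiff V W ℓ * ‖V‖ ^ j := by
    simpa [hx] using enorm'_feat_sub_le x hlip hφ0 hdiff hV1 j hj
  refine ⟨⟨fun j => ?_, ?_⟩, fun j hj => (hfeat j hj).trans (by gcongr; omega),
    ⟨fun j => ?_, ?_⟩, fun j hj => (hD j hj).trans (by gcongr; omega)⟩
  · calc enorm' (uFeat φ V x j) ≤ ‖V‖ * ‖V‖ ^ (j : ℕ) :=
          (enorm'_uFeat_le x V j).trans (by gcongr; exact hfeat j j.2.le)
      _ ≤ ‖V‖ ^ (L + 1) := by rw [← pow_succ']; gcongr; omega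
  · calc |netOut φ V x| ≤ ‖V‖ * ‖V‖ ^ L :=
          (abs_netOut_le x V).trans (by gcongr; exact hfeat L le_rfl)
      _ = ‖V‖ ^ (L + 1) := (pow_succ' _ _).symm
  · calc enorm' (uFeat φ V x j - uFeat φ W x j) ≤ layerOpDiff V W ℓ * (‖V‖ * ‖V‖ ^ (j : ℕ)) :=
          enorm'_uFeat_sub_le x hdiff hV1 j (hfeat j j.2.le) (hD j j.2.le)
      _ ≤ layerOpDiff V W ℓ * ‖V‖ ^ (L + 1) := by rw [← pow_succ']; gcongr; omega
  · calc |netOut φ V x - netOut φ W x| ≤ layerOpDiff V W ℓ * (‖V‖ * ‖V‖ ^ L) :=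
          abs_netOut_sub_le x hdiff hV1 (hfeat L le_rfl) (hD L le_rfl)
      _ = layerOpDiff V W ℓ * ‖V‖ ^ (L + 1) := by rw [← pow_succ']

/-- Lemma `l:u.x.bounds`: bounds on pre- and post-activation features,
and on their change when a single layer of the weights is swapped.  The paper's
pre-activation `u_{j,s}` for `j ∈ {1,…,L}` is `uFeat` at 0-based index `j - 1`; for
`j = L + 1` it is the scalar network output. -/
theorem statement14
    (L p : ℕ) (hL : 1 ≤ L) (hp : 1 ≤ p)
    (φ : ℝ → ℝ) (h : ℝ) (hh0 : 0 < h) (hφ : SmoothApproxReLU φ h)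
    (x : Fin p → ℝ) (hx : enorm' x = 1)
    (V W : Params L p) (ℓ : Fin (L + 1)) (hdiff : eqExcept V W ℓ)
    (hV : Real.sqrt ((L : ℝ) + 1 / 2) < ‖V‖) (hW : Real.sqrt ((L : ℝ) + 1 / 2) < ‖W‖) :
    ((∀ j : Fin L, enorm' (uFeat φ V x j) ≤ ‖V‖ ^ (L + 1)) ∧
        |netOut φ V x| ≤ ‖V‖ ^ (L + 1)) ∧
    (∀ j : ℕ, j ≤ L → enorm' (feat φ V x j) ≤ ‖V‖ ^ (L + 1)) ∧
    ((∀ j : Fin L, enorm' (uFeat φ V x j - uFeat φ W x j) ≤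
          layerOpDiff V W ℓ * ‖V‖ ^ (L + 1)) ∧
        |netOut φ V x - netOut φ W x| ≤ layerOpDiff V W ℓ * ‖V‖ ^ (L + 1)) ∧
    (∀ j : ℕ, j ≤ L → enorm' (feat φ V x j - feat φ W x j) ≤
        layerOpDiff V W ℓ * ‖V‖ ^ (L + 1)) :=
  statement14_general L p hL φ h hφ x hx V W ℓ hdiff hV
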